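/- Barrier value functions are supersolutions: assume F has a bounded density, let W be the unique increasing twice continuously differentiable solution of L*(W)=0 on (0,∞) with W(0)=1, and let x₀ ≥ p/(c−r) satisfy W'(x₀) ≤ W'(x) for all x ∈ (0,x₀]. Define U(x) = W(x)/W'(x₀) for 0 ≤ x ≤ x₀ and U(x) = W(x₀)/W'(x₀) + (x−x₀) for x > x₀. Then U is a viscosity supersolution of the HJB equation max{1−u'(x), L*(u)(x)}=0 at every x ∈ (0,∞). -/

import Mathlib

open MeasureTheory Set Filter

/-- The operator `L_γ(u,f)(x)` from the paper: second-order integro-differential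
operator with drift/volatility controlled by `γ`, integral term with respect to the
Lebesgue–Stieltjes measure of the claim-size distribution `F`. -/
noncomputable def Lg (p β c r σ : ℝ) (F : StieltjesFunction ℝ)
    (γ : ℝ) (u f : ℝ → ℝ) (x : ℝ) : ℝ :=
  σ ^ 2 * γ ^ 2 * x ^ 2 * deriv (deriv f) x / 2 + (p + r * γ * x) * deriv f x
    - (c + β) * u x + β * ∫ α in Icc (0 : ℝ) x, u (x - α) ∂F.measure

/-- `L*(u,f)(x) = sup_{γ ∈ [0,1]} L_γ(u,f)(x)`. -/
noncomputable def Lstar (p β c r σ : ℝ) (F : StieltjesFunction ℝ)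
    (u f : ℝ → ℝ) (x : ℝ) : ℝ :=
  ⨆ γ : Icc (0 : ℝ) 1, Lg p β c r σ F (γ : ℝ) u f x

/-- `u` is a viscosity supersolution of `max {1 - u'(x), L*(u)(x)} = 0` at `x ∈ (0,∞)`:
every `C²` test function `φ` such that `u - φ` attains its minimum over `(0,∞)` at `x`
satisfies `max {1 - φ'(x), sup_γ L_γ(u,φ)(x)} ≤ 0`. -/
def SupersolHJBAt (p β c r σ : ℝ) (F : StieltjesFunction ℝ) (u : ℝ → ℝ) (x : ℝ) : Prop :=
  ∀ φ : ℝ → ℝ, ContDiff ℝ 2 φ → (∀ y ∈ Ioi (0 : ℝ), u x - φ x ≤ u y - φ y) →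
    max (1 - deriv φ x) (Lstar p β c r σ F u φ x) ≤ 0

/-- `u` is a viscosity subsolution of `max {1 - u'(x), L*(u)(x)} = 0` at `x ∈ (0,∞)`:
every `C²` test function `ψ` such that `u - ψ` attains its maximum over `(0,∞)` at `x`
satisfies `max {1 - ψ'(x), sup_γ L_γ(u,ψ)(x)} ≥ 0`. -/
def SubsolHJBAt (p β c r σ : ℝ) (F : StieltjesFunction ℝ) (u : ℝ → ℝ) (x : ℝ) : Prop :=
  ∀ ψ : ℝ → ℝ, ContDiff ℝ 2 ψ → (∀ y ∈ Ioi (0 : ℝ), u y - ψ y ≤ u x - ψ x) →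
    0 ≤ max (1 - deriv ψ x) (Lstar p β c r σ F u ψ x)

/-- `W` is an increasing classical (twice continuously differentiable) solution of
`L*(W) = 0` on `(0,∞)` with boundary condition `W 0 = 1`. -/
def IsSolW (p β c r σ : ℝ) (F : StieltjesFunction ℝ) (W : ℝ → ℝ) : Prop :=
  StrictMonoOn W (Ici 0) ∧ ContinuousOn W (Ici 0) ∧ ContDiffOn ℝ 2 W (Ioi 0) ∧
    W 0 = 1 ∧ ∀ x ∈ Ioi (0 : ℝ), Lstar p β c r σ F W W x = 0

open Topology

/-!
Write `k = W'(x₀)`; it is positive, and the mean value theorem with `W' ≥ k` on `(0, x₀]` gives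
`W(x₀)/k > x₀`. On `(0, x₀]` the barrier value is `U = W/k` to the left of `x`, so
`L_γ(U) = L_γ(W)/k ≤ 0` and `U' = W'/k ≥ 1`. On `(x₀, ∞)` it has slope one, lies above the
diagonal and satisfies `∫ U(x - α) dF(α) ≤ U(x)`, so
`L_γ(U)(x) ≤ p + r x - c U(x) < p - (c - r) x₀ ≤ 0`. A `C²` test function touching `U` from
below at `x` has the same first derivative there and, comparing on the left of `x` where `U`
is smooth, a smaller second derivative; as `L_γ` increases with the second derivative of the
test function, both classical inequalities pass to it.
-/

theorem IsLocalMinOn.deriv_deriv_nonneg {f : ℝ → ℝ} {x : ℝ} (hmin : IsLocalMinOn f (Iic x) x)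
    (hd : deriv f x = 0) (hc : ContinuousAt f x) : 0 ≤ deriv (deriv f) x := by
  by_contra! hneg
  -- the second-derivative test makes `x` a local maximum as well, so `f` is constant on the
  -- left of `x`, where however `deriv f` is positive
  have hpos : ∀ᶠ y in 𝓝[<] x, 0 < deriv f y := deriv_pos_left_of_sign_deriv <|
    nhdsWithin_le_nhds (eventually_nhdsWithin_sign_eq_of_deriv_neg hneg hd)
  have hconst : ∀ᶠ y in 𝓝[<] x, f y = f x := by
    filter_upwards [nhdsWithin_le_nhds (isLocalMax_of_deriv_deriv_neg hneg hd hc),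
      nhdsWithin_mono x Iio_subset_Iic_self hmin] with y hmax hmin using le_antisymm hmax hmin
  have hzero : ∀ᶠ y in 𝓝[<] x, deriv f y = 0 := by
    filter_upwards [eventually_eventually_nhdsWithin.2 hconst, self_mem_nhdsWithin]
      with y hy (hyx : y < x)
    have hy' : f =ᶠ[𝓝 y] fun _ => f x := by rwa [nhdsWithin_eq_nhds.2 (Iio_mem_nhds hyx)] at hy
    simpa using hy'.deriv_eq
  obtain ⟨y, hy, hy'⟩ := (hpos.and hzero).exists
  exact hy.ne' hy'

theorem deriv_deriv_le_of_isLocalMinOn_sub {g φ : ℝ → ℝ} {x : ℝ} (hg : ContDiffAt ℝ 2 g x)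
    (hφ : ContDiffAt ℝ 2 φ x) (hd : deriv φ x = deriv g x)
    (hmin : IsLocalMinOn (g - φ) (Iic x) x) : deriv (deriv φ) x ≤ deriv (deriv g) x := by
  have hg' : ContDiffAt ℝ 1 (deriv g) x := hg.derivWithin (by norm_num)
  have hφ' : ContDiffAt ℝ 1 (deriv φ) x := hφ.derivWithin (by norm_num)
  have hderiv : deriv (g - φ) =ᶠ[𝓝 x] deriv g - deriv φ := by
    filter_upwards [hg.eventually (by simp), hφ.eventually (by simp)] with y hgy hφy
    exact deriv_sub (hgy.differentiableAt (by norm_num)) (hφy.differentiableAt (by norm_num))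
  have h := hmin.deriv_deriv_nonneg (by rw [hderiv.eq_of_nhds]; simp [hd])
    (hg.continuousAt.sub hφ.continuousAt)
  rw [hderiv.deriv_eq, deriv_sub (hg'.differentiableAt (by norm_num))
    (hφ'.differentiableAt (by norm_num))] at h
  linarith

theorem IsLocalMinOn.hasDerivAt_nonpos_of_Iic {f : ℝ → ℝ} {a f' : ℝ}
    (hmin : IsLocalMinOn f (Iic a) a) (hf : HasDerivAt f f' a) : f' ≤ 0 := by
  have hcone : (a - 1) - a ∈ posTangentConeAt (Iic a) a :=
    sub_mem_posTangentConeAt_of_segment_subset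
      ((convex_Iic a).segment_subset self_mem_Iic (by simp))
  simpa using hmin.hasFDerivWithinAt_nonneg hf.hasFDerivAt.hasFDerivWithinAt hcone

theorem setIntegral_Icc_comp_sub_le {μ : Measure ℝ} [IsFiniteMeasureOnCompacts μ] {v : ℝ → ℝ}
    {x : ℝ} (hμ : μ (Icc 0 x) ≤ 1) (hc : ContinuousOn v (Icc 0 x))
    (hm : MonotoneOn v (Icc 0 x)) (hvx : 0 ≤ v x) :
    ∫ α in Icc (0 : ℝ) x, v (x - α) ∂μ ≤ v x := by
  rcases lt_or_ge x 0 with hx | hx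
  · simpa [Icc_eq_empty_of_lt hx] using hvx
  have hmaps : MapsTo (fun α => x - α) (Icc 0 x) (Icc 0 x) := fun α hα =>
    ⟨sub_nonneg.2 hα.2, sub_le_self x hα.1⟩
  calc ∫ α in Icc (0 : ℝ) x, v (x - α) ∂μ ≤ ∫ _ in Icc (0 : ℝ) x, v x ∂μ :=
        setIntegral_mono_on ((hc.comp (by fun_prop) hmaps).integrableOn_compact isCompact_Icc)
          (integrableOn_const (measure_Icc_lt_top).ne) measurableSet_Icc
          fun α hα => hm (hmaps hα) ⟨hx, le_rfl⟩ (hmaps hα).2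
    _ = μ.real (Icc 0 x) * v x := by rw [setIntegral_const, smul_eq_mul]
    _ ≤ 1 * v x := by
        gcongr
        exact ENNReal.toReal_le_of_le_ofReal zero_le_one (by simpa using hμ)
    _ = v x := one_mul _

theorem StieltjesFunction.measure_Icc_zero_le_one (F : StieltjesFunction ℝ)
    (hF1 : ∀ x, F x ≤ 1) (hF0 : ∀ x ≤ 0, F x = 0) (x : ℝ) : F.measure (Icc 0 x) ≤ 1 := by
  have hleft : 0 ≤ Function.leftLim F 0 := (hF0 (-1) (by norm_num)).symm.le.trans
    (F.mono.le_leftLim (by norm_num))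
  rw [F.measure_Icc]
  exact ENNReal.ofReal_le_one.2 (by linarith [hF1 x])

section Operator

variable (p β c r σ : ℝ) (F : StieltjesFunction ℝ)

theorem Lg_le_Lstar {u f : ℝ → ℝ} {x γ : ℝ} (hγ : γ ∈ Icc (0 : ℝ) 1) :
    Lg p β c r σ F γ u f x ≤ Lstar p β c r σ F u f x := by
  have : Continuous fun γ : Icc (0 : ℝ) 1 => Lg p β c r σ F γ u f x := by
    unfold Lg
    fun_prop
  exact le_ciSup (isCompact_range this).bddAbove (⟨γ, hγ⟩ : Icc (0 : ℝ) 1)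

theorem Lstar_le {u f : ℝ → ℝ} {x b : ℝ} (h : ∀ γ ∈ Icc (0 : ℝ) 1, Lg p β c r σ F γ u f x ≤ b) :
    Lstar p β c r σ F u f x ≤ b :=
  have : Nonempty (Icc (0 : ℝ) 1) := ⟨⟨0, left_mem_Icc.2 zero_le_one⟩⟩
  ciSup_le fun γ => h γ γ.2

theorem Lg_congr {u v : ℝ → ℝ} {x : ℝ} (γ : ℝ) (f : ℝ → ℝ) (hx : 0 ≤ x)
    (h : EqOn u v (Icc 0 x)) : Lg p β c r σ F γ u f x = Lg p β c r σ F γ v f x := by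
  unfold Lg
  rw [h ⟨hx, le_rfl⟩, setIntegral_congr_fun measurableSet_Icc fun α hα =>
    h ⟨sub_nonneg.2 hα.2, sub_le_self x hα.1⟩]

theorem Lg_div_const (γ : ℝ) (u f : ℝ → ℝ) (x k : ℝ) :
    Lg p β c r σ F γ (fun y => u y / k) (fun y => f y / k) x = Lg p β c r σ F γ u f x / k := by
  have hd : deriv (fun y => f y / k) = fun y => deriv f y / k := funext fun y => deriv_div_const k
  unfold Lg
  simp only [hd, deriv_div_const, integral_div]
  ring

theorem Lg_le_Lg_of_deriv_deriv_le {u φ ψ : ℝ → ℝ} {x γ : ℝ} (hd : deriv φ x = deriv ψ x)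
    (hdd : deriv (deriv φ) x ≤ deriv (deriv ψ) x) :
    Lg p β c r σ F γ u φ x ≤ Lg p β c r σ F γ u ψ x := by
  unfold Lg
  rw [hd]
  gcongr

theorem Lg_le_of_deriv_eq_one {u f : ℝ → ℝ} {x γ : ℝ} (hβ : 0 ≤ β) (hr : 0 ≤ r) (hx : 0 ≤ x)
    (hγ : γ ∈ Icc (0 : ℝ) 1) (hd : deriv f x = 1) (hdd : deriv (deriv f) x = 0)
    (hint : ∫ α in Icc (0 : ℝ) x, u (x - α) ∂F.measure ≤ u x) :
    Lg p β c r σ F γ u f x ≤ p + r * x - c * u x := by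
  unfold Lg
  rw [hd, hdd, mul_zero, zero_div, zero_add, mul_one]
  have : r * γ * x ≤ r * x := by
    rw [mul_assoc]
    exact mul_le_mul_of_nonneg_left (mul_le_of_le_one_left hx hγ.2) hr
  linarith [mul_le_mul_of_nonneg_left hint hβ]

theorem supersolHJBAt_of_touching {u g : ℝ → ℝ} {x : ℝ} (hx : 0 < x) (hg : ContDiffAt ℝ 2 g x)
    (hug : ∀ᶠ y in 𝓝[≤] x, u y = g y) (hu : HasDerivAt u (deriv g x) x) (hg1 : 1 ≤ deriv g x)
    (hL : ∀ γ ∈ Icc (0 : ℝ) 1, Lg p β c r σ F γ u g x ≤ 0) :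
    SupersolHJBAt p β c r σ F u x := by
  intro φ hφ hmin
  have hloc : IsLocalMin (fun y => u y - φ y) x :=
    eventually_of_mem (Ioi_mem_nhds hx) fun y hy => hmin y hy
  have hd : deriv φ x = deriv g x := by
    have := hloc.hasDerivAt_eq_zero (hu.sub (hφ.differentiable (by norm_num) x).hasDerivAt)
    linarith
  have hdd : deriv (deriv φ) x ≤ deriv (deriv g) x := by
    refine deriv_deriv_le_of_isLocalMinOn_sub hg hφ.contDiffAt hd ?_
    have hux : u x = g x := hug.self_of_nhdsWithin self_mem_Iic
    filter_upwards [hug, nhdsWithin_le_nhds hloc] with y hy hy'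
    simpa [hux, hy] using hy'
  exact max_le (by linarith) <| Lstar_le p β c r σ F fun γ hγ =>
    (Lg_le_Lg_of_deriv_deriv_le p β c r σ F hd hdd).trans (hL γ hγ)

end Operator

noncomputable def barrier (W : ℝ → ℝ) (x₀ x : ℝ) : ℝ :=
  if x ≤ x₀ then W x / deriv W x₀ else W x₀ / deriv W x₀ + (x - x₀)

section Barrier

variable {W : ℝ → ℝ} {x₀ x : ℝ}

theorem barrier_of_le (h : x ≤ x₀) : barrier W x₀ x = W x / deriv W x₀ := if_pos h

theorem barrier_of_lt (h : x₀ < x) : barrier W x₀ x = W x₀ / deriv W x₀ + (x - x₀) :=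
  if_neg h.not_ge

theorem continuousOn_barrier (hW : ContinuousOn W (Ici 0)) :
    ContinuousOn (barrier W x₀) (Ici 0) := by
  refine ContinuousOn.if (fun y hy => ?_) ((hW.mono inter_subset_left).div_const _)
    (by fun_prop)
  rw [show {a : ℝ | a ≤ x₀} = Iic x₀ from rfl, frontier_Iic] at hy
  rw [hy.2, sub_self, add_zero]

theorem monotoneOn_barrier (hk : 0 ≤ deriv W x₀) (hW : MonotoneOn W (Ici 0)) :
    MonotoneOn (barrier W x₀) (Ici 0) := by
  intro a ha b hb hab
  rcases le_or_gt b x₀ with hb₀ | hb₀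
  · rw [barrier_of_le (hab.trans hb₀), barrier_of_le hb₀]
    gcongr
    exact hW ha hb hab
  rcases le_or_gt a x₀ with ha₀ | ha₀
  · rw [barrier_of_le ha₀, barrier_of_lt hb₀]
    have : W a ≤ W x₀ := hW ha (mem_Ici.2 ((mem_Ici.1 ha).trans ha₀)) ha₀
    have : W a / deriv W x₀ ≤ W x₀ / deriv W x₀ := by gcongr
    linarith
  · rw [barrier_of_lt ha₀, barrier_of_lt hb₀]
    linarith

theorem hasDerivAt_barrier_of_lt (h : x₀ < x) : HasDerivAt (barrier W x₀) 1 x := by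
  have : HasDerivAt (fun y => W x₀ / deriv W x₀ + (y - x₀)) 1 x := by
    simpa using ((hasDerivAt_id x).sub_const x₀).const_add (W x₀ / deriv W x₀)
  exact this.congr_of_eventuallyEq <|
    eventually_of_mem (Ioi_mem_nhds h) fun y hy => barrier_of_lt hy

theorem hasDerivAt_barrier_of_le (h : x ≤ x₀) (hW : DifferentiableAt ℝ W x)
    (hk : deriv W x₀ ≠ 0) : HasDerivAt (barrier W x₀) (deriv W x / deriv W x₀) x := by
  have hleft : HasDerivAt (fun y => W y / deriv W x₀) (deriv W x / deriv W x₀) x :=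
    hW.hasDerivAt.div_const _
  rcases h.lt_or_eq with h | rfl
  · exact hleft.congr_of_eventuallyEq <|
      eventually_of_mem (Iio_mem_nhds h) fun y hy => barrier_of_le hy.le
  -- at the kink both one-sided derivatives are `1`, since the slope is normalized by `W'(x₀)`
  rw [div_self hk] at hleft ⊢
  have hl : HasDerivWithinAt (barrier W x) 1 (Iic x) x :=
    hleft.hasDerivWithinAt.congr (fun y hy => barrier_of_le hy) (barrier_of_le le_rfl)
  have hr : HasDerivWithinAt (barrier W x) 1 (Ici x) x := by
    have : HasDerivAt (fun y => W x / deriv W x + (y - x)) 1 x := by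
      simpa using ((hasDerivAt_id x).sub_const x).const_add (W x / deriv W x)
    refine this.hasDerivWithinAt.congr (fun y hy => ?_) (by simp [barrier_of_le le_rfl])
    rcases (mem_Ici.1 hy).lt_or_eq with hy | rfl
    · exact barrier_of_lt hy
    · simp [barrier_of_le le_rfl]
  simpa [Iic_union_Ici] using hl.union hr

end Barrier

section Solution

variable {p β c r σ : ℝ} {F : StieltjesFunction ℝ} {W : ℝ → ℝ}

theorem IsSolW.differentiableAt (hW : IsSolW p β c r σ F W) {x : ℝ} (hx : 0 < x) :
    DifferentiableAt ℝ W x :=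
  (hW.2.2.1.contDiffAt (Ioi_mem_nhds hx)).differentiableAt (by norm_num)

theorem IsSolW.Lg_nonpos (hW : IsSolW p β c r σ F W) {x γ : ℝ} (hx : 0 < x)
    (hγ : γ ∈ Icc (0 : ℝ) 1) : Lg p β c r σ F γ W W x ≤ 0 :=
  (Lg_le_Lstar p β c r σ F hγ).trans (hW.2.2.2.2 x hx).le

theorem IsSolW.setIntegral_le (hW : IsSolW p β c r σ F W) (hF1 : ∀ x, F x ≤ 1)
    (hF0 : ∀ x ≤ 0, F x = 0) {x : ℝ} (hx : 0 ≤ x) :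
    ∫ α in Icc (0 : ℝ) x, W (x - α) ∂F.measure ≤ W x :=
  setIntegral_Icc_comp_sub_le (F.measure_Icc_zero_le_one hF1 hF0 x)
    (hW.2.1.mono Icc_subset_Ici_self) (hW.1.monotoneOn.mono Icc_subset_Ici_self)
    (by linarith [hW.2.2.2.1, hW.1.monotoneOn self_mem_Ici hx hx])

/-- If `W'(x₀) = 0`, then `x₀` minimizes `W'` on `(0, x₀]`, so `W''(x₀) ≤ 0` and
`L_γ(W)(x₀) ≤ -c W(x₀) < 0` for every `γ`, contradicting `L*(W)(x₀) = 0`. -/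
theorem IsSolW.deriv_pos (hW : IsSolW p β c r σ F W) (hβ : 0 ≤ β) (hc : 0 < c)
    (hF1 : ∀ x, F x ≤ 1) (hF0 : ∀ x ≤ 0, F x = 0) {x₀ : ℝ} (hx₀ : 0 < x₀)
    (hmin : ∀ x ∈ Ioc (0 : ℝ) x₀, deriv W x₀ ≤ deriv W x) : 0 < deriv W x₀ := by
  have hnonneg : 0 ≤ deriv W x₀ := by
    rw [← derivWithin_of_isOpen isOpen_Ioi hx₀]
    exact (hW.1.monotoneOn.mono Ioi_subset_Ici_self).derivWithin_nonneg
  refine hnonneg.lt_of_ne fun hk => ?_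
  have hW'' : deriv (deriv W) x₀ ≤ 0 := by
    have hW' : ContDiffAt ℝ 1 (deriv W) x₀ :=
      (hW.2.2.1.contDiffAt (Ioi_mem_nhds hx₀)).derivWithin (by norm_num)
    refine IsLocalMinOn.hasDerivAt_nonpos_of_Iic ?_ (hW'.differentiableAt (by norm_num)).hasDerivAt
    filter_upwards [nhdsWithin_le_nhds (Ioi_mem_nhds hx₀), self_mem_nhdsWithin] with y hy hyx
    exact hmin y ⟨hy, hyx⟩
  have hWx₀ : 1 < W x₀ := hW.2.2.2.1 ▸ hW.1 self_mem_Ici hx₀.le hx₀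
  have hint := hW.setIntegral_le hF1 hF0 hx₀.le
  have hneg : Lstar p β c r σ F W W x₀ ≤ -(c * W x₀) := by
    refine Lstar_le p β c r σ F fun γ _ => ?_
    unfold Lg
    rw [← hk]
    nlinarith [mul_nonpos_of_nonneg_of_nonpos (by positivity : 0 ≤ σ ^ 2 * γ ^ 2 * x₀ ^ 2) hW'',
      mul_le_mul_of_nonneg_left hint hβ]
  nlinarith [hW.2.2.2.2 x₀ hx₀]

theorem IsSolW.lt_div_deriv (hW : IsSolW p β c r σ F W) {x₀ : ℝ} (hx₀ : 0 < x₀)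
    (hk : 0 < deriv W x₀) (hmin : ∀ x ∈ Ioc (0 : ℝ) x₀, deriv W x₀ ≤ deriv W x) :
    x₀ < W x₀ / deriv W x₀ := by
  have hdiff : DifferentiableOn ℝ W (interior (Icc 0 x₀)) := by
    rw [interior_Icc]
    exact fun y hy => (hW.differentiableAt hy.1).differentiableWithinAt
  have hderiv : ∀ y ∈ interior (Icc 0 x₀), deriv W x₀ ≤ deriv W y := by
    rw [interior_Icc]
    exact fun y hy => hmin y ⟨hy.1, hy.2.le⟩
  have hgrowth := (convex_Icc 0 x₀).mul_sub_le_image_sub_of_le_deriv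
    (hW.2.1.mono Icc_subset_Ici_self) hdiff hderiv
    0 (left_mem_Icc.2 hx₀.le) x₀ (right_mem_Icc.2 hx₀.le) hx₀.le
  rw [lt_div_iff₀ hk]
  linarith [hW.2.2.2.1]

end Solution

section BarrierSupersolution

variable {p β c r σ : ℝ} {F : StieltjesFunction ℝ} {W : ℝ → ℝ} {x₀ x : ℝ}

theorem supersolHJBAt_barrier_of_le (hW : IsSolW p β c r σ F W) (hk : 0 < deriv W x₀)
    (hmin : ∀ x ∈ Ioc (0 : ℝ) x₀, deriv W x₀ ≤ deriv W x) (hx : 0 < x) (hle : x ≤ x₀) :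
    SupersolHJBAt p β c r σ F (barrier W x₀) x := by
  have hd : deriv (fun y => W y / deriv W x₀) x = deriv W x / deriv W x₀ := deriv_div_const _
  refine supersolHJBAt_of_touching p β c r σ F hx
    ((hW.2.2.1.contDiffAt (Ioi_mem_nhds hx)).div_const (deriv W x₀)) ?_ ?_ ?_ fun γ hγ => ?_
  · exact eventually_nhdsWithin_of_forall fun y hy => barrier_of_le ((mem_Iic.1 hy).trans hle)
  · exact hd ▸ hasDerivAt_barrier_of_le hle (hW.differentiableAt hx) hk.ne'
  · exact hd ▸ (one_le_div hk).2 (hmin x ⟨hx, hle⟩)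
  · rw [Lg_congr p β c r σ F γ _ hx.le fun y hy => barrier_of_le (hy.2.trans hle), Lg_div_const]
    exact div_nonpos_of_nonpos_of_nonneg (hW.Lg_nonpos hx hγ) hk.le

theorem supersolHJBAt_barrier_of_lt (hW : IsSolW p β c r σ F W) (hβ : 0 ≤ β) (hr : 0 ≤ r)
    (hrc : r < c) (hF1 : ∀ x, F x ≤ 1) (hF0 : ∀ x ≤ 0, F x = 0) (hx₀ : p / (c - r) ≤ x₀)
    (hx₀pos : 0 < x₀) (hk : 0 < deriv W x₀)
    (hmin : ∀ x ∈ Ioc (0 : ℝ) x₀, deriv W x₀ ≤ deriv W x) (hlt : x₀ < x) :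
    SupersolHJBAt p β c r σ F (barrier W x₀) x := by
  set g : ℝ → ℝ := fun y => W x₀ / deriv W x₀ + (y - x₀)
  have hg : deriv g = fun _ => 1 := by funext y; simp [g]
  have hx : 0 < x := hx₀pos.trans hlt
  have hx₀W := hW.lt_div_deriv hx₀pos hk hmin
  have hint : ∫ α in Icc (0 : ℝ) x, barrier W x₀ (x - α) ∂F.measure ≤ barrier W x₀ x :=
    setIntegral_Icc_comp_sub_le (F.measure_Icc_zero_le_one hF1 hF0 x)
      ((continuousOn_barrier hW.2.1).mono Icc_subset_Ici_self)
      ((monotoneOn_barrier hk.le hW.1.monotoneOn).mono Icc_subset_Ici_self)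
      (by rw [barrier_of_lt hlt]; linarith)
  refine supersolHJBAt_of_touching p β c r σ F hx (g := g) (by fun_prop) ?_ ?_ ?_ fun γ hγ => ?_
  · filter_upwards [nhdsWithin_le_nhds (Ioi_mem_nhds hlt)] with y hy using barrier_of_lt hy
  · exact hg ▸ hasDerivAt_barrier_of_lt hlt
  · simp [hg]
  have hpx₀ : p ≤ (c - r) * x₀ := (div_le_iff₀ (sub_pos.2 hrc)).1 hx₀ |>.trans_eq (mul_comm _ _)
  calc Lg p β c r σ F γ (barrier W x₀) g x ≤ p + r * x - c * barrier W x₀ x :=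
        Lg_le_of_deriv_eq_one p β c r σ F hβ hr hx.le hγ (by simp [hg]) (by simp [hg]) hint
    _ ≤ 0 := by
        rw [barrier_of_lt hlt]
        nlinarith [mul_le_mul_of_nonneg_left hx₀W.le (hr.trans hrc.le)]

end BarrierSupersolution

theorem barrier_value_is_supersolution_general
    (p β c r σ : ℝ) (hp : 0 < p) (hβ : 0 < β) (hr : 0 < r) (hrc : r < c)
    (F : StieltjesFunction ℝ)
    (hF01 : ∀ x : ℝ, F x ∈ Icc (0 : ℝ) 1)
    (hF0 : ∀ x : ℝ, x ≤ 0 → F x = 0)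
    (W : ℝ → ℝ) (hW : IsSolW p β c r σ F W)
    (x₀ : ℝ) (hx₀ : p / (c - r) ≤ x₀)
    (hmin : ∀ x ∈ Ioc (0 : ℝ) x₀, deriv W x₀ ≤ deriv W x)
    (U : ℝ → ℝ)
    (hU : ∀ x : ℝ, U x =
      if x ≤ x₀ then W x / deriv W x₀ else W x₀ / deriv W x₀ + (x - x₀)) :
    ∀ x ∈ Ioi (0 : ℝ), SupersolHJBAt p β c r σ F U x := by
  intro x hx
  have hx₀pos : 0 < x₀ := (div_pos hp (sub_pos.2 hrc)).trans_le hx₀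
  have hF1 : ∀ x, F x ≤ 1 := fun x => (hF01 x).2
  have hk := hW.deriv_pos hβ.le (hr.trans hrc) hF1 hF0 hx₀pos hmin
  obtain rfl : U = barrier W x₀ := funext hU
  rcases le_or_gt x x₀ with hle | hlt
  · exact supersolHJBAt_barrier_of_le hW hk hmin hx hle
  · exact supersolHJBAt_barrier_of_lt hW hβ.le hr.le hrc hF1 hF0 hx₀ hx₀pos hk hmin hlt

/-- **Barrier value functions are supersolutions** (from the proof of Proposition 7.1):
assume `F` has a bounded density, let `W` be the unique increasing `C²` solution of
`L*(W)=0` on `(0,∞)` with `W 0 = 1`, and let `x₀ ≥ p/(c-r)` be such that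
`W'(x₀) ≤ W'(x)` for all `x ∈ (0,x₀]`. Then the value function of the barrier strategy
with level `x₀`, `U(x) = W(x)/W'(x₀)` for `x ≤ x₀` and
`U(x) = W(x₀)/W'(x₀) + (x - x₀)` for `x > x₀`, is a viscosity supersolution of the HJB
equation `max {1 - u'(x), L*(u)(x)} = 0` at every `x ∈ (0,∞)`. -/
theorem barrier_value_is_supersolution
    (p β c r σ : ℝ) (hp : 0 < p) (hβ : 0 < β) (hr : 0 < r) (hrc : r < c) (hσ : 0 < σ)
    (F : StieltjesFunction ℝ)
    (hF01 : ∀ x : ℝ, F x ∈ Icc (0 : ℝ) 1)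
    (hF0 : ∀ x : ℝ, x ≤ 0 → F x = 0)
    (hF1 : Tendsto (⇑F) atTop (nhds 1))
    (hFmean : IntegrableOn id (Ici (0 : ℝ)) F.measure)
    (hFd : ∃ f : ℝ → ℝ, Measurable f ∧ (∃ C : ℝ, ∀ t, |f t| ≤ C) ∧ (∀ t, 0 ≤ f t) ∧
      (∀ t : ℝ, t ≤ 0 → f t = 0) ∧ ∀ x : ℝ, F x = ∫ t in (0 : ℝ)..x, f t)
    (W : ℝ → ℝ) (hW : IsSolW p β c r σ F W)
    (x₀ : ℝ) (hx₀ : p / (c - r) ≤ x₀)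
    (hmin : ∀ x ∈ Ioc (0 : ℝ) x₀, deriv W x₀ ≤ deriv W x)
    (U : ℝ → ℝ)
    (hU : ∀ x : ℝ, U x =
      if x ≤ x₀ then W x / deriv W x₀ else W x₀ / deriv W x₀ + (x - x₀)) :
    ∀ x ∈ Ioi (0 : ℝ), SupersolHJBAt p β c r σ F U x :=
  barrier_value_is_supersolution_general p β c r σ hp hβ hr hrc F hF01 hF0 W hW x₀ hx₀ hmin U hU
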